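/- arXiv:2007.09501 — 3 statements merged into one kernel-verified Lean document; each statement's English description precedes it below -/
import Mathlib

section
/- Let D = (I_r | M) be a standard representative matrix. If p₁ is an interior point of P(B₁) and p₂ is an interior point of P(B₂) for bases B₁, B₂ of D, and p₁ − p₂ ∈ im_Z(𝐃^T), then p₁ = p₂ (and B₁ = B₂). -/
open Matrix MeasureTheory
open scoped ENNReal

noncomputable section

/-- The standard representative matrix `D = (I_r | M)`. -/
def Dmat {r m : ℕ} (M : Matrix (Fin r) (Fin m) ℤ) : Matrix (Fin r) (Fin r ⊕ Fin m) ℤ :=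
  Matrix.fromCols 1 M

/-- The dual matrix `D̂ = (-Mᵀ | I_{n-r})`. -/
def Dhat {r m : ℕ} (M : Matrix (Fin r) (Fin m) ℤ) : Matrix (Fin m) (Fin r ⊕ Fin m) ℤ :=
  Matrix.fromCols (-Mᵀ) 1

/-- The full matrix `𝐃 = (I_r, M ; -Mᵀ, I_{n-r})`. -/
def Dfull {r m : ℕ} (M : Matrix (Fin r) (Fin m) ℤ) :
    Matrix (Fin r ⊕ Fin m) (Fin r ⊕ Fin m) ℤ :=
  Matrix.fromBlocks 1 M (-Mᵀ) 1

/-- Column `j` of `D`, as a real vector. -/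
def colD {r m : ℕ} (M : Matrix (Fin r) (Fin m) ℤ) (j : Fin r ⊕ Fin m) : Fin r → ℝ :=
  fun a => (Dmat M a j : ℝ)

/-- Column `j` of `D̂`, as a real vector. -/
def colDhat {r m : ℕ} (M : Matrix (Fin r) (Fin m) ℤ) (j : Fin r ⊕ Fin m) : Fin m → ℝ :=
  fun a => (Dhat M a j : ℝ)

/-- An order-respecting enumeration of the columns in `B` (via `finSumFinEquiv`). -/
def colEnum {r m : ℕ} (B : Finset (Fin r ⊕ Fin m))
    (h : (B.image finSumFinEquiv).card = r) : Fin r → Fin r ⊕ Fin m :=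
  fun i => finSumFinEquiv.symm ((B.image finSumFinEquiv).orderIsoOfFin h i)

/-- The multiplicity `m(B) = |det (D|_B)|` of an `r`-subset of columns. -/
def mult {r m : ℕ} (M : Matrix (Fin r) (Fin m) ℤ) (B : Finset (Fin r ⊕ Fin m)) : ℕ :=
  if h : (B.image finSumFinEquiv).card = r then
    ((Dmat M).submatrix id (colEnum B h)).det.natAbs
  else 0

/-- `B` is a basis of `D`: an `r`-subset of columns with nonzero determinant. -/
def IsBasis {r m : ℕ} (M : Matrix (Fin r) (Fin m) ℤ) (B : Finset (Fin r ⊕ Fin m)) : Prop :=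
  B.card = r ∧ mult M B ≠ 0

/-- Closed fundamental parallelepiped of the vectors `v i`, `i ∈ S`. -/
def PPc {ι κ : Type*} (v : ι → κ → ℝ) (S : Finset ι) : Set (κ → ℝ) :=
  {x | ∃ a : ι → ℝ, (∀ i ∈ S, 0 ≤ a i ∧ a i ≤ 1) ∧ x = ∑ i ∈ S, a i • v i}

/-- Open fundamental parallelepiped of the vectors `v i`, `i ∈ S`. -/
def PPo {ι κ : Type*} (v : ι → κ → ℝ) (S : Finset ι) : Set (κ → ℝ) :=
  {x | ∃ a : ι → ℝ, (∀ i ∈ S, 0 < a i ∧ a i < 1) ∧ x = ∑ i ∈ S, a i • v i}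

/-- The closed parallelepiped `P(B) = P₁(B) × P₂(B) ⊆ ℝⁿ`. -/
def Pclosed {r m : ℕ} (M : Matrix (Fin r) (Fin m) ℤ) (B : Finset (Fin r ⊕ Fin m)) :
    Set ((Fin r ⊕ Fin m) → ℝ) :=
  {x | (x ∘ Sum.inl) ∈ PPc (colD M) B ∧ (x ∘ Sum.inr) ∈ PPc (colDhat M) Bᶜ}

/-- The open parallelepiped `P(B)° = P₁(B)° × P₂(B)°`. -/
def Popen {r m : ℕ} (M : Matrix (Fin r) (Fin m) ℤ) (B : Finset (Fin r ⊕ Fin m)) :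
    Set ((Fin r ⊕ Fin m) → ℝ) :=
  {x | (x ∘ Sum.inl) ∈ PPo (colD M) B ∧ (x ∘ Sum.inr) ∈ PPo (colDhat M) Bᶜ}

/-- The tile `T(D) = ⋃_{B basis} P(B)`. -/
def Tile {r m : ℕ} (M : Matrix (Fin r) (Fin m) ℤ) : Set ((Fin r ⊕ Fin m) → ℝ) :=
  ⋃ B ∈ {B : Finset (Fin r ⊕ Fin m) | IsBasis M B}, Pclosed M B

/-- The lattice vector `𝐃ᵀ z ∈ ℝⁿ` for `z ∈ ℤⁿ`. -/
def latVec {r m : ℕ} (M : Matrix (Fin r) (Fin m) ℤ) (z : (Fin r ⊕ Fin m) → ℤ) :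
    (Fin r ⊕ Fin m) → ℝ :=
  fun j => ((Matrix.vecMul z (Dfull M)) j : ℝ)

/-- The integer lattice `im_ℤ(𝐃ᵀ)` spanned by the rows of `𝐃`. -/
def LatZ {r m : ℕ} (M : Matrix (Fin r) (Fin m) ℤ) : Submodule ℤ ((Fin r ⊕ Fin m) → ℤ) :=
  Submodule.span ℤ (Set.range fun i => Dfull M i)

/-- `w` is a shifting vector: it does not lie in the span of any facet of `P(B)`
for any basis `B` (split form: neither its first `r` coordinates lie in the span of a
facet of `P₁(B)` nor its last `n-r` coordinates in the span of a facet of `P₂(B)`). -/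
def IsShifting {r m : ℕ} (M : Matrix (Fin r) (Fin m) ℤ) (w : (Fin r ⊕ Fin m) → ℝ) : Prop :=
  ∀ B : Finset (Fin r ⊕ Fin m), IsBasis M B →
    (∀ j ∈ B, (w ∘ Sum.inl) ∉ Submodule.span ℝ (colD M '' ↑(B.erase j))) ∧
    (∀ j ∈ Bᶜ, (w ∘ Sum.inr) ∉ Submodule.span ℝ (colDhat M '' ↑(Bᶜ.erase j)))

/-- `x` is `w`-associated with `B`: `x + εw ∈ P(B)` for all sufficiently small `ε > 0`. -/
def WAssoc {r m : ℕ} (M : Matrix (Fin r) (Fin m) ℤ) (w : (Fin r ⊕ Fin m) → ℝ)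
    (x : (Fin r ⊕ Fin m) → ℝ) (B : Finset (Fin r ⊕ Fin m)) : Prop :=
  ∃ ε₀ > (0 : ℝ), ∀ ε : ℝ, 0 < ε → ε < ε₀ → x + ε • w ∈ Pclosed M B

end

/-!
Write `pᵢ = (D αᵢ, D̂ βᵢ)` with coefficients in `[0, 1)`, `αᵢ` supported on `Bᵢ` and `βᵢ` on its
complement, so `αᵢ βᵢ = 0` coordinatewise. If `p₁ - p₂ = 𝐃ᵀ z`, let `w` be `z` with its last
`n - r` coordinates negated; then `α₁ - α₂ - w ∈ ker D` and `β₁ - β₂ + w ∈ ker D̂`. These kernels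
are orthogonal, so `∑ⱼ (cⱼ - wⱼ)(dⱼ + wⱼ) = 0` for `c = α₁ - α₂`, `d = β₁ - β₂`. Each term is
`≤ 0`: `|cⱼ|, |dⱼ| < 1` and `cⱼ dⱼ = -(α₁ⱼ β₂ⱼ + α₂ⱼ β₁ⱼ) ≤ 0`. So every term vanishes, which
forces `w = 0` and `α₁ β₂ = α₂ β₁ = 0`, i.e. `z = 0` and `B₁ = B₂`.
-/

section Orthogonality

variable {R ι κ : Type*} [CommRing R] [Fintype ι] [Fintype κ] [DecidableEq ι] [DecidableEq κ]

theorem dotProduct_eq_zero_of_mulVec_fromCols_eq_zero (M : Matrix ι κ R) {u v : ι ⊕ κ → R}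
    (hu : fromCols 1 M *ᵥ u = 0) (hv : fromCols (-Mᵀ) 1 *ᵥ v = 0) : u ⬝ᵥ v = 0 := by
  rw [fromCols_mulVec, one_mulVec, add_eq_zero_iff_eq_neg] at hu
  rw [fromCols_mulVec, one_mulVec, neg_mulVec, neg_add_eq_zero, mulVec_transpose] at hv
  calc u ⬝ᵥ v = u ∘ Sum.inl ⬝ᵥ v ∘ Sum.inl + u ∘ Sum.inr ⬝ᵥ v ∘ Sum.inr :=
        Fintype.sum_sum_type _
    _ = 0 := by
      rw [hu, ← hv, neg_dotProduct, dotProduct_comm, dotProduct_mulVec, dotProduct_comm,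
        neg_add_cancel]

end Orthogonality

theorem sub_intCast_mul_add_intCast_neg {c d : ℝ} {n : ℤ} (hn : n ≠ 0) (hc : |c| < 1)
    (hd : |d| < 1) : (c - n) * (d + n) < 0 := by
  rw [abs_lt] at hc hd
  rcases hn.lt_or_gt with hn | hn
  · have : (n : ℝ) ≤ -1 := by exact_mod_cast Int.le_sub_one_of_lt hn
    exact mul_neg_of_pos_of_neg (by linarith) (by linarith)
  · have : (1 : ℝ) ≤ n := by exact_mod_cast hn
    exact mul_neg_of_neg_of_pos (by linarith) (by linarith)

theorem eq_zero_of_sub_intCast_dotProduct_add_intCast_eq_zero {ι : Type*} [Fintype ι]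
    {c d : ι → ℝ} {n : ι → ℤ} (hc : ∀ j, |c j| < 1) (hd : ∀ j, |d j| < 1)
    (hcd : ∀ j, c j * d j ≤ 0) (h : (c - (↑) ∘ n) ⬝ᵥ (d + (↑) ∘ n) = 0) :
    n = 0 ∧ ∀ j, c j * d j = 0 := by
  have hterm : ∀ j, (c j - n j) * (d j + n j) ≤ 0 := fun j => by
    by_cases hn : n j = 0
    · simpa [hn] using hcd j
    · exact (sub_intCast_mul_add_intCast_neg hn (hc j) (hd j)).le
  have hzero : ∀ j, (c j - n j) * (d j + n j) = 0 := fun j =>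
    (Finset.sum_eq_zero_iff_of_nonpos fun j _ => hterm j).mp h j (Finset.mem_univ j)
  have hn : n = 0 := funext fun j => by
    by_contra hn
    exact (sub_intCast_mul_add_intCast_neg hn (hc j) (hd j)).ne (hzero j)
  exact ⟨hn, fun j => by simpa [hn] using hzero j⟩

theorem exists_coeff_of_mem_PPo {ι κ : Type*} [Fintype ι] {v : ι → κ → ℝ} {S : Finset ι}
    {x : κ → ℝ} (hx : x ∈ PPo v S) :
    ∃ c : ι → ℝ, (∀ i, c i ∈ Set.Ico 0 1) ∧ (∀ i, 0 < c i ↔ i ∈ S) ∧ x = ∑ i, c i • v i := by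
  classical
  obtain ⟨a, ha, rfl⟩ := hx
  refine ⟨fun i => if i ∈ S then a i else 0, fun i => ?_, fun i => ?_, ?_⟩
  · by_cases hi : i ∈ S
    · simpa [hi] using ⟨(ha i hi).1.le, (ha i hi).2⟩
    · simp [hi]
  · by_cases hi : i ∈ S
    · simpa [hi] using (ha i hi).1
    · simp [hi]
  · simp only [ite_smul, zero_smul, Finset.sum_ite_mem, Finset.univ_inter]

section InteriorCoeffs

variable {ι : Type*}

/-- The coefficients of a point of `P(B)°`, extended by zero: `α` for the columns of `D` in `B`,
`β` for the columns of `D̂` outside `B`. -/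
structure IsInteriorCoeffs (B : Finset ι) (α β : ι → ℝ) : Prop where
  left_mem_Ico : ∀ j, α j ∈ Set.Ico 0 1
  right_mem_Ico : ∀ j, β j ∈ Set.Ico 0 1
  left_pos_iff : ∀ j, 0 < α j ↔ j ∈ B
  right_pos_iff : ∀ j, 0 < β j ↔ j ∉ B

namespace IsInteriorCoeffs

variable {B B₁ B₂ : Finset ι} {α β α₁ β₁ α₂ β₂ : ι → ℝ}

theorem left_mul_right_eq_zero (h : IsInteriorCoeffs B α β) (j : ι) : α j * β j = 0 := by
  by_cases hj : j ∈ B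
  · have : ¬ 0 < β j := fun hβ => (h.right_pos_iff j).mp hβ hj
    simp [le_antisymm (not_lt.mp this) (h.right_mem_Ico j).1]
  · have : ¬ 0 < α j := fun hα => hj ((h.left_pos_iff j).mp hα)
    simp [le_antisymm (not_lt.mp this) (h.left_mem_Ico j).1]

theorem mem_of_left_mul_right_eq_zero (h₁ : IsInteriorCoeffs B₁ α₁ β₁)
    (h₂ : IsInteriorCoeffs B₂ α₂ β₂) {j : ι} (hj : j ∈ B₁) (h : α₁ j * β₂ j = 0) : j ∈ B₂ := by
  by_contra hj₂
  exact (mul_pos ((h₁.left_pos_iff j).mpr hj) ((h₂.right_pos_iff j).mpr hj₂)).ne' h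

theorem sub_mul_sub_eq (h₁ : IsInteriorCoeffs B₁ α₁ β₁) (h₂ : IsInteriorCoeffs B₂ α₂ β₂)
    (j : ι) : (α₁ j - α₂ j) * (β₁ j - β₂ j) = -(α₁ j * β₂ j + α₂ j * β₁ j) := by
  linear_combination h₁.left_mul_right_eq_zero j + h₂.left_mul_right_eq_zero j

theorem eq_zero_and_eq_of_dotProduct_eq_zero [Fintype ι] (h₁ : IsInteriorCoeffs B₁ α₁ β₁)
    (h₂ : IsInteriorCoeffs B₂ α₂ β₂) {n : ι → ℤ}
    (h : (α₁ - α₂ - (↑) ∘ n) ⬝ᵥ (β₁ - β₂ + (↑) ∘ n) = 0) : n = 0 ∧ B₁ = B₂ := by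
  have hα₁ := h₁.left_mem_Ico
  have hα₂ := h₂.left_mem_Ico
  have hβ₁ := h₁.right_mem_Ico
  have hβ₂ := h₂.right_mem_Ico
  have hcross₁ : ∀ j, 0 ≤ α₁ j * β₂ j := fun j => mul_nonneg (hα₁ j).1 (hβ₂ j).1
  have hcross₂ : ∀ j, 0 ≤ α₂ j * β₁ j := fun j => mul_nonneg (hα₂ j).1 (hβ₁ j).1
  obtain ⟨hn, hprod⟩ := eq_zero_of_sub_intCast_dotProduct_add_intCast_eq_zero
    (fun j => abs_sub_lt_of_nonneg_of_lt (hα₁ j).1 (hα₁ j).2 (hα₂ j).1 (hα₂ j).2)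
    (fun j => abs_sub_lt_of_nonneg_of_lt (hβ₁ j).1 (hβ₁ j).2 (hβ₂ j).1 (hβ₂ j).2)
    (fun j => by
      rw [sub_mul_sub_eq h₁ h₂, neg_nonpos]
      exact add_nonneg (hcross₁ j) (hcross₂ j)) h
  refine ⟨hn, Finset.ext fun j => ?_⟩
  have hcross := hprod j
  rw [sub_mul_sub_eq h₁ h₂, neg_eq_zero, add_eq_zero_iff_of_nonneg (hcross₁ j) (hcross₂ j)]
    at hcross
  exact ⟨fun hj => mem_of_left_mul_right_eq_zero h₁ h₂ hj hcross.1,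
    fun hj => mem_of_left_mul_right_eq_zero h₂ h₁ hj hcross.2⟩

end IsInteriorCoeffs

end InteriorCoeffs

def negInr {R ι κ : Type*} [Neg R] (z : ι ⊕ κ → R) : ι ⊕ κ → R :=
  Sum.elim (z ∘ Sum.inl) (-(z ∘ Sum.inr))

theorem negInr_eq_zero {R ι κ : Type*} [AddGroup R] {z : ι ⊕ κ → R} :
    negInr z = 0 ↔ z = 0 := by
  refine ⟨fun h => funext fun j => ?_, fun h => by simp [h, negInr]⟩
  rcases j with i | k
  · simpa [negInr] using congrFun h (Sum.inl i)
  · simpa [negInr] using congrFun h (Sum.inr k)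

section StandardRepresentative

variable {r m : ℕ} (M : Matrix (Fin r) (Fin m) ℤ)

theorem Dfull_eq_fromRows : Dfull M = fromRows (Dmat M) (Dhat M) := by
  simp [Dfull, Dmat, Dhat]

theorem vecMul_Dfull_comp_inl (z : Fin r ⊕ Fin m → ℤ) :
    (z ᵥ* Dfull M) ∘ Sum.inl = Dmat M *ᵥ negInr z := by
  rw [Dfull_eq_fromRows, vecMul_fromRows, Dmat, Dhat, fromCols_mulVec]
  ext i
  simp [negInr, vecMul_neg, vecMul_transpose, mulVec_neg]

theorem vecMul_Dfull_comp_inr (z : Fin r ⊕ Fin m → ℤ) :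
    (z ᵥ* Dfull M) ∘ Sum.inr = -(Dhat M *ᵥ negInr z) := by
  rw [Dfull_eq_fromRows, vecMul_fromRows, Dmat, Dhat, fromCols_mulVec]
  ext k
  simp [negInr, neg_mulVec, mulVec_transpose, add_comm]

theorem latVec_comp_inl (z : Fin r ⊕ Fin m → ℤ) :
    latVec M z ∘ Sum.inl = (Dmat M).map Int.cast *ᵥ (Int.cast ∘ negInr z) := by
  ext i
  exact (congrArg Int.cast (congrFun (vecMul_Dfull_comp_inl M z) i)).trans
    ((Int.castRingHom ℝ).map_mulVec _ _ i)

theorem latVec_comp_inr (z : Fin r ⊕ Fin m → ℤ) :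
    latVec M z ∘ Sum.inr = -((Dhat M).map Int.cast *ᵥ (Int.cast ∘ negInr z)) := by
  ext k
  exact (congrArg Int.cast (congrFun (vecMul_Dfull_comp_inr M z) k)).trans
    ((Int.cast_neg _).trans (congrArg Neg.neg ((Int.castRingHom ℝ).map_mulVec _ _ k)))

theorem dotProduct_eq_zero_of_mulVec_Dmat_of_mulVec_Dhat {u v : Fin r ⊕ Fin m → ℝ}
    (hu : (Dmat M).map Int.cast *ᵥ u = 0) (hv : (Dhat M).map Int.cast *ᵥ v = 0) :
    u ⬝ᵥ v = 0 := by
  rw [Dmat, fromCols_map, Matrix.map_one _ Int.cast_zero Int.cast_one] at hu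
  rw [Dhat, fromCols_map, Matrix.map_one _ Int.cast_zero Int.cast_one,
    Matrix.map_neg _ Int.cast_neg, transpose_map] at hv
  exact dotProduct_eq_zero_of_mulVec_fromCols_eq_zero _ hu hv

theorem sum_smul_colD (c : Fin r ⊕ Fin m → ℝ) :
    ∑ j, c j • colD M j = (Dmat M).map Int.cast *ᵥ c := by
  simp only [mulVec_eq_sum, op_smul_eq_smul]
  rfl

theorem sum_smul_colDhat (c : Fin r ⊕ Fin m → ℝ) :
    ∑ j, c j • colDhat M j = (Dhat M).map Int.cast *ᵥ c := by
  simp only [mulVec_eq_sum, op_smul_eq_smul]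
  rfl

theorem exists_isInteriorCoeffs_of_mem_Popen {B : Finset (Fin r ⊕ Fin m)}
    {p : Fin r ⊕ Fin m → ℝ} (hp : p ∈ Popen M B) :
    ∃ α β, IsInteriorCoeffs B α β ∧ p ∘ Sum.inl = (Dmat M).map Int.cast *ᵥ α ∧
      p ∘ Sum.inr = (Dhat M).map Int.cast *ᵥ β := by
  obtain ⟨α, hα, hαB, hpα⟩ := exists_coeff_of_mem_PPo hp.1
  obtain ⟨β, hβ, hβB, hpβ⟩ := exists_coeff_of_mem_PPo hp.2
  refine ⟨α, β, ⟨hα, hβ, hαB, fun j => (hβB j).trans Finset.mem_compl⟩, ?_, ?_⟩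
  · rw [hpα, sum_smul_colD]
  · rw [hpβ, sum_smul_colDhat]

end StandardRepresentative

theorem stmt8_general {r m : ℕ} (M : Matrix (Fin r) (Fin m) ℤ)
    (B₁ B₂ : Finset (Fin r ⊕ Fin m))
    (p₁ p₂ : (Fin r ⊕ Fin m) → ℝ) (hp₁ : p₁ ∈ Popen M B₁) (hp₂ : p₂ ∈ Popen M B₂)
    (hz : ∃ z : (Fin r ⊕ Fin m) → ℤ, p₁ - p₂ = latVec M z) :
    p₁ = p₂ ∧ B₁ = B₂ := by
  obtain ⟨z, hz⟩ := hz
  obtain ⟨α₁, β₁, h₁, hα₁, hβ₁⟩ := exists_isInteriorCoeffs_of_mem_Popen M hp₁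
  obtain ⟨α₂, β₂, h₂, hα₂, hβ₂⟩ := exists_isInteriorCoeffs_of_mem_Popen M hp₂
  have hD : (Dmat M).map Int.cast *ᵥ (α₁ - α₂ - Int.cast ∘ negInr z) = 0 := by
    rw [mulVec_sub, mulVec_sub, ← hα₁, ← hα₂, ← latVec_comp_inl, ← hz]
    exact sub_self _
  have hDhat : (Dhat M).map Int.cast *ᵥ (β₁ - β₂ + Int.cast ∘ negInr z) = 0 := by
    rw [mulVec_add, mulVec_sub, ← hβ₁, ← hβ₂, ← neg_neg ((Dhat M).map Int.cast *ᵥ _),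
      ← latVec_comp_inr, ← hz]
    exact add_neg_cancel _
  obtain ⟨hw, rfl⟩ := h₁.eq_zero_and_eq_of_dotProduct_eq_zero h₂
    (dotProduct_eq_zero_of_mulVec_Dmat_of_mulVec_Dhat M hD hDhat)
  rw [negInr_eq_zero] at hw
  refine ⟨sub_eq_zero.mp ?_, rfl⟩
  rw [hz, hw]
  ext j
  simp [latVec]

/-- interior points of the parallelepipeds `P(B₁)`, `P(B₂)` that differ by
a lattice vector of `im_ℤ(𝐃ᵀ)` must be equal (and then `B₁ = B₂`). -/
theorem stmt8 {r m : ℕ} (M : Matrix (Fin r) (Fin m) ℤ)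
    (B₁ B₂ : Finset (Fin r ⊕ Fin m)) (h₁ : IsBasis M B₁) (h₂ : IsBasis M B₂)
    (p₁ p₂ : (Fin r ⊕ Fin m) → ℝ) (hp₁ : p₁ ∈ Popen M B₁) (hp₂ : p₂ ∈ Popen M B₂)
    (hz : ∃ z : (Fin r ⊕ Fin m) → ℤ, p₁ - p₂ = latVec M z) :
    p₁ = p₂ ∧ B₁ = B₂ :=
  stmt8_general M B₁ B₂ p₁ p₂ hp₁ hp₂ hz
end

section
/- For any basis B of a standard representative matrix D = (I_r | M), the volume (Lebesgue measure) of the parallelepiped P₁(B) spanned by the columns of D indexed by B equals m(B), the volume of P₂(B) spanned by the columns of D̂ indexed by the complement of B equals m(B), and hence the volume of P(B) = P₁(B) × P₂(B) equals m(B)². -/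
open Matrix MeasureTheory
open scoped ENNReal

/-! The parallelepiped spanned by the columns of a square integer matrix has volume `|det|`,
so `vol P₁(B) = |det D_B| = m(B)`, `vol P₂(B) = |det D̂_{Bᶜ}|`, and `P(B) = P₁(B) × P₂(B)` has the
product volume. For the dual minor write `B = B₁ ⊔ B₂` with `B₁ ⊆ [r]`, `B₂ ⊆ [n-r]`, and match
`[r] ∖ B₁` with `B₂` (they have the same size). After reordering rows and columns, `D_B` is block
upper triangular with diagonal blocks `I` and `M[[r] ∖ B₁, B₂]`, and `D̂_{Bᶜ}` is block lower
triangular with diagonal blocks `-M[[r] ∖ B₁, B₂]ᵀ` and `I`; hence `|det D̂_{Bᶜ}| = |det D_B|`. -/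

open Function

theorem Matrix.abs_det_submatrix_eq_of_range_eq {R α β κ₁ κ₂ : Type*} [CommRing R]
    [LinearOrder R] [IsStrictOrderedRing R] [Fintype κ₁] [DecidableEq κ₁] [Fintype κ₂]
    [DecidableEq κ₂] (A : Matrix α β R) (σ₁ : κ₁ ≃ α) (σ₂ : κ₂ ≃ α)
    {τ₁ : κ₁ → β} {τ₂ : κ₂ → β} (h₁ : Injective τ₁) (h₂ : Injective τ₂)
    (h : Set.range τ₁ = Set.range τ₂) :
    |(A.submatrix σ₁ τ₁).det| = |(A.submatrix σ₂ τ₂).det| := by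
  let π : κ₂ ≃ κ₁ := (Equiv.ofInjective τ₂ h₂).trans
    ((Equiv.setCongr h.symm).trans (Equiv.ofInjective τ₁ h₁).symm)
  have hπ : τ₁ ∘ π = τ₂ := funext fun x => by
    simp [π, Equiv.apply_ofInjective_symm]
  rw [← hπ, ← abs_det_submatrix_equiv_equiv (σ₂.trans σ₁.symm) π]
  congr 3
  ext i j
  simp

theorem Matrix.det_fromCols_one_submatrix_sumCompl {R ρ μ : Type*} [CommRing R] [Fintype ρ]
    [DecidableEq ρ] {p : ρ → Prop} [DecidablePred p] {q : μ → Prop} (M : Matrix ρ μ R)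
    (e : {i // ¬p i} ≃ {j // q j}) :
    ((fromCols (1 : Matrix ρ ρ R) M).submatrix (Equiv.sumCompl p)
        (Sum.map Subtype.val (Subtype.val ∘ e))).det =
      (M.submatrix Subtype.val (Subtype.val ∘ e)).det := by
  have hblocks : (fromCols (1 : Matrix ρ ρ R) M).submatrix (Equiv.sumCompl p)
      (Sum.map Subtype.val (Subtype.val ∘ e)) =
      fromBlocks (1 : Matrix {i // p i} {i // p i} R) (M.submatrix Subtype.val (Subtype.val ∘ e))
        0 (M.submatrix Subtype.val (Subtype.val ∘ e)) := by
    ext (i | i) (j | j)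
    · simp [one_apply, Subtype.val_inj]
    · simp
    · have hij : (i : ρ) ≠ j := fun h => i.2 (h ▸ j.2)
      simp [hij]
    · simp
  rw [hblocks, det_fromBlocks_zero₂₁, det_one, one_mul]

theorem Matrix.det_fromCols_neg_transpose_one_submatrix_sumCompl {R ρ μ : Type*} [CommRing R]
    [Fintype ρ] [DecidableEq ρ] [Fintype μ] [DecidableEq μ] {p : ρ → Prop} [DecidablePred p]
    {q : μ → Prop} [DecidablePred q] (M : Matrix ρ μ R) (e : {i // ¬p i} ≃ {j // q j}) :
    ((fromCols (-Mᵀ) (1 : Matrix μ μ R)).submatrix (Equiv.sumCompl q)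
        (Sum.map (Subtype.val ∘ e.symm) Subtype.val)).det =
      (-1) ^ Fintype.card {j // q j} * (M.submatrix Subtype.val (Subtype.val ∘ e)).det := by
  have hsquare : M.submatrix (Subtype.val ∘ e.symm) Subtype.val =
      (M.submatrix Subtype.val (Subtype.val ∘ e)).submatrix e.symm e.symm := by
    ext i j
    simp
  have hblocks : (fromCols (-Mᵀ) (1 : Matrix μ μ R)).submatrix (Equiv.sumCompl q)
      (Sum.map (Subtype.val ∘ e.symm) Subtype.val) =
      fromBlocks (-(M.submatrix (Subtype.val ∘ e.symm) Subtype.val)ᵀ) 0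
        (-(M.submatrix (Subtype.val ∘ e.symm) Subtype.val)ᵀ)
        (1 : Matrix {j // ¬q j} {j // ¬q j} R) := by
    ext (i | i) (j | j)
    · simp
    · have hij : (i : μ) ≠ j := fun h => j.2 (h ▸ i.2)
      simp [hij]
    · simp
    · simp [one_apply, Subtype.val_inj]
  rw [hblocks, det_fromBlocks_zero₁₂, det_one, mul_one, det_neg, det_transpose, hsquare,
    det_submatrix_equiv_self]

theorem volume_parallelepiped_eq_abs_det {ι κ : Type*} [Fintype ι] [Fintype κ] [DecidableEq κ]
    (v : ι → κ → ℝ) (e : κ ≃ ι) :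
    volume (parallelepiped v) = ENNReal.ofReal |(Matrix.of (v ∘ e)).det| := by
  rw [← parallelepiped_comp_equiv v e, ← Pi.basisFun_det_apply, ← Measure.addHaar_parallelepiped,
    Module.Basis.addHaar_def, Module.Basis.parallelepiped_basisFun, addHaarMeasure_eq_volume_pi]

theorem PPc_eq_parallelepiped {ι κ : Type*} (v : ι → κ → ℝ) (S : Finset ι) :
    PPc v S = parallelepiped (fun i : S => v i) := by
  classical
  ext x
  simp only [PPc, Set.mem_ofPred_eq, mem_parallelepiped_iff, Set.mem_Icc]
  constructor
  · rintro ⟨a, ha, rfl⟩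
    exact ⟨fun i => a i, ⟨fun i => (ha i i.2).1, fun i => (ha i i.2).2⟩,
      (Finset.sum_coe_sort S fun i => a i • v i).symm⟩
  · rintro ⟨t, ht, rfl⟩
    refine ⟨fun i => if h : i ∈ S then t ⟨i, h⟩ else 0,
      fun i hi => by simpa [dif_pos hi] using ⟨ht.1 ⟨i, hi⟩, ht.2 ⟨i, hi⟩⟩, ?_⟩
    rw [← Finset.sum_coe_sort S]
    exact Finset.sum_congr rfl fun i _ => by simp

theorem volume_PPc_intCast_eq_natAbs_det {ι κ : Type*} [Fintype κ] [DecidableEq κ]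
    (A : Matrix κ ι ℤ) (S : Finset ι) (e : κ ≃ S) :
    volume (PPc (fun j i => (A i j : ℝ)) S) =
      ((A.submatrix id (Subtype.val ∘ e)).det.natAbs : ℝ≥0∞) := by
  have hcols : Matrix.of ((fun (j : S) i => (A i j : ℝ)) ∘ e) =
      ((A.submatrix id (Subtype.val ∘ e)).map (Int.cast : ℤ → ℝ))ᵀ := rfl
  have hdet : ((A.submatrix id (Subtype.val ∘ e)).map (Int.cast : ℤ → ℝ)).det =
      (A.submatrix id (Subtype.val ∘ e)).det :=
    ((Int.castRingHom ℝ).map_det _).symm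
  rw [PPc_eq_parallelepiped, volume_parallelepiped_eq_abs_det _ e, hcols, det_transpose, hdet,
    ← Int.cast_abs, Int.abs_eq_natAbs, Int.cast_natCast, ENNReal.ofReal_natCast]

theorem volume_comp_inl_mem_and_comp_inr_mem {α β : Type*} [Fintype α] [Fintype β]
    (s : Set (α → ℝ)) (t : Set (β → ℝ)) :
    volume {x : α ⊕ β → ℝ | x ∘ Sum.inl ∈ s ∧ x ∘ Sum.inr ∈ t} = volume s * volume t := by
  have hpre : {x : α ⊕ β → ℝ | x ∘ Sum.inl ∈ s ∧ x ∘ Sum.inr ∈ t} =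
      MeasurableEquiv.sumPiEquivProdPi (fun _ => ℝ) ⁻¹' s ×ˢ t := rfl
  rw [hpre, (volume_measurePreserving_sumPiEquivProdPi _).measure_preimage_equiv,
    Measure.volume_eq_prod, Measure.prod_prod]

section StandardRepresentative

variable {r m : ℕ} (M : Matrix (Fin r) (Fin m) ℤ) {B : Finset (Fin r ⊕ Fin m)}

theorem range_colEnum (h : (B.image finSumFinEquiv).card = r) :
    Set.range (colEnum B h) = B := by
  have hcol : colEnum B h = finSumFinEquiv.symm ∘ (B.image finSumFinEquiv).orderEmbOfFin h := by
    ext1 i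
    simp [colEnum]
  rw [hcol, Set.range_comp, Finset.range_orderEmbOfFin, Finset.coe_image, Equiv.symm_image_image]

theorem colEnum_injective (h : (B.image finSumFinEquiv).card = r) : Injective (colEnum B h) :=
  finSumFinEquiv.symm.injective.comp (Subtype.coe_injective.comp (OrderIso.injective _))

theorem mult_eq_natAbs_det_submatrix (hB : B.card = r) {κ : Type*} [Fintype κ] [DecidableEq κ]
    (σ : κ ≃ Fin r) {τ : κ → Fin r ⊕ Fin m} (hτ : Injective τ) (hrange : Set.range τ = B) :
    mult M B = ((Dmat M).submatrix σ τ).det.natAbs := by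
  have h : (B.image finSumFinEquiv).card = r := by
    rw [Finset.card_image_of_injective _ finSumFinEquiv.injective, hB]
  rw [mult, dif_pos h]
  exact Int.natAbs_eq_natAbs_iff.mpr <| abs_eq_abs.mp <|
    (Dmat M).abs_det_submatrix_eq_of_range_eq (Equiv.refl _) σ (colEnum_injective h) hτ
      ((range_colEnum h).trans hrange.symm)

theorem card_inl_not_mem_eq_card_inr_mem (hB : B.card = r) :
    Fintype.card {i : Fin r // Sum.inl i ∉ B} = Fintype.card {j : Fin m // Sum.inr j ∈ B} := by
  have hleft := Fintype.card_of_subtype B.toLeft fun i => Finset.mem_toLeft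
  have hright := Fintype.card_of_subtype B.toRight fun j => Finset.mem_toRight
  have hsplit := B.card_toLeft_add_card_toRight
  rw [Fintype.card_subtype_compl, hleft, hright, Fintype.card_fin]
  omega

theorem range_sumMap_val_equiv_eq
    (e : {i : Fin r // Sum.inl i ∉ B} ≃ {j : Fin m // Sum.inr j ∈ B}) :
    Set.range (Sum.map (Subtype.val : {i // Sum.inl i ∈ B} → Fin r) (Subtype.val ∘ e)) =
      (B : Set (Fin r ⊕ Fin m)) := by
  ext (i | j)
  · simp
  · simp only [Set.mem_range, Sum.exists, Sum.map_inl, Sum.map_inr, reduceCtorEq, exists_false,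
      Sum.inr.injEq, Function.comp_apply, false_or, Finset.mem_coe, Subtype.exists]
    exact ⟨fun ⟨a, b, h⟩ => h ▸ (e ⟨a, b⟩).2,
      fun h => ⟨_, _, congrArg Subtype.val (e.apply_symm_apply ⟨j, h⟩)⟩⟩

theorem range_sumMap_equiv_symm_val_eq_compl
    (e : {i : Fin r // Sum.inl i ∉ B} ≃ {j : Fin m // Sum.inr j ∈ B}) :
    Set.range (Sum.map (Subtype.val ∘ e.symm) (Subtype.val : {j // Sum.inr j ∉ B} → Fin m)) =
      ((Bᶜ : Finset _) : Set (Fin r ⊕ Fin m)) := by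
  ext (i | j)
  · simp only [Set.mem_range, Sum.exists, Sum.map_inl, Sum.map_inr, reduceCtorEq, exists_false,
      Sum.inl.injEq, Function.comp_apply, or_false, Finset.coe_compl, Set.mem_compl_iff,
      Finset.mem_coe, Subtype.exists]
    exact ⟨fun ⟨a, b, h⟩ => h ▸ (e.symm ⟨a, b⟩).2,
      fun h => ⟨_, _, congrArg Subtype.val (e.symm_apply_apply ⟨i, h⟩)⟩⟩
  · simp

theorem natAbs_det_Dhat_submatrix_eq_mult (hB : B.card = r) {κ : Type*} [Fintype κ]
    [DecidableEq κ] (σ : κ ≃ Fin m) {τ : κ → Fin r ⊕ Fin m} (hτ : Injective τ)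
    (hrange : Set.range τ = ((Bᶜ : Finset _) : Set (Fin r ⊕ Fin m))) :
    ((Dhat M).submatrix σ τ).det.natAbs = mult M B := by
  obtain ⟨e⟩ := Fintype.card_eq.mp (card_inl_not_mem_eq_card_inr_mem hB)
  have hD := mult_eq_natAbs_det_submatrix M hB (Equiv.sumCompl fun i => Sum.inl i ∈ B)
    (Sum.map_injective.mpr ⟨Subtype.val_injective, Subtype.val_injective.comp e.injective⟩)
    (range_sumMap_val_equiv_eq e)
  have hDhat := (Dhat M).abs_det_submatrix_eq_of_range_eq σ
    (Equiv.sumCompl fun j => Sum.inr j ∈ B) hτ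
    (Sum.map_injective.mpr ⟨Subtype.val_injective.comp e.symm.injective, Subtype.val_injective⟩)
    (hrange.trans (range_sumMap_equiv_symm_val_eq_compl e).symm)
  rw [Dmat, det_fromCols_one_submatrix_sumCompl] at hD
  rw [Dhat, det_fromCols_neg_transpose_one_submatrix_sumCompl, abs_mul, abs_pow, abs_neg,
    abs_one, one_pow, one_mul] at hDhat
  rw [hD]
  exact Int.natAbs_eq_natAbs_iff.mpr (abs_eq_abs.mp hDhat)

end StandardRepresentative

/-- `vol P₁(B) = m(B)`, `vol P₂(B) = m(B)`, and `vol P(B) = m(B)²`. -/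
theorem stmt9 {r m : ℕ} (M : Matrix (Fin r) (Fin m) ℤ)
    (B : Finset (Fin r ⊕ Fin m)) (hB : IsBasis M B) :
    volume (PPc (colD M) B) = (mult M B : ℝ≥0∞) ∧
    volume (PPc (colDhat M) Bᶜ) = (mult M B : ℝ≥0∞) ∧
    volume (Pclosed M B) = (mult M B : ℝ≥0∞) ^ 2 := by
  have hcard : B.card = r := hB.1
  obtain ⟨e⟩ : Nonempty (Fin r ≃ B) := Fintype.card_eq.mp (by simp [hcard])
  obtain ⟨e'⟩ : Nonempty (Fin m ≃ ↥Bᶜ) := Fintype.card_eq.mp (by simp [hcard])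
  have hP₁ : volume (PPc (colD M) B) = mult M B := by
    rw [mult_eq_natAbs_det_submatrix M hcard (Equiv.refl _)
      (Subtype.val_injective.comp e.injective) (by simp)]
    exact volume_PPc_intCast_eq_natAbs_det (Dmat M) B e
  have hP₂ : volume (PPc (colDhat M) Bᶜ) = mult M B := by
    rw [← natAbs_det_Dhat_submatrix_eq_mult M hcard (Equiv.refl _)
      (Subtype.val_injective.comp e'.injective) (by ext; simp)]
    exact volume_PPc_intCast_eq_natAbs_det (Dhat M) Bᶜ e'
  refine ⟨hP₁, hP₂, ?_⟩
  rw [Pclosed, volume_comp_inl_mem_and_comp_inr_mem, hP₁, hP₂, sq]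
end

section
/- Let D = (I_r | M) be a standard representative matrix and 𝔴 a shifting vector. For each basis B of D, the number of integer points z ∈ Z^n such that z + ε𝔴 lies in P(B) for all sufficiently small ε > 0 equals m(B)². -/
open Matrix MeasureTheory
open scoped ENNReal

/-!
Since `P(B) = P₁(B) × P₂(B)`, the count factors. In the basis formed by the columns of `D_B`,
the condition `z + ε𝔴 ∈ P₁(B)` for all small `ε > 0` says that each coordinate of `D_B⁻¹ z` lies
in `[0, 1)` or in `(0, 1]`, according to the sign of the corresponding coordinate of `D_B⁻¹ 𝔴`,
which is nonzero because `𝔴` is shifting. These `z` form a system of representatives of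
`ℤʳ / D_B ℤʳ`, so there are `|det D_B| = m(B)` of them; likewise `P₂(B)` contributes
`|det D̂_{Bᶜ}|` points. Finally `|det D̂_{Bᶜ}| = |det D_B|`: stacking `D` on the unit rows indexed
by `Bᶜ` gives a matrix `N` with `det N = ± det D_B`, and `N 𝐃ᵀ` is block triangular with diagonal
blocks `D Dᵀ = 1 + M Mᵀ` and `D̂_{Bᶜ}ᵀ`, while `det 𝐃 = det (1 + M Mᵀ) ≠ 0`.
-/

open Filter Topology Set Function

section HalfOpen

def halfOpenUnit (c : ℝ) : Set ℝ :=
  if 0 < c then Ico 0 1 else Ioc 0 1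

lemma eventually_add_mul_mem_Icc_iff_of_pos {c : ℝ} (hc : 0 < c) (t : ℝ) :
    (∀ᶠ ε in 𝓝[>] (0 : ℝ), t + ε * c ∈ Icc 0 1) ↔ t ∈ Ico 0 1 := by
  have hlim : Tendsto (fun ε => t + ε * c) (𝓝[>] 0) (𝓝 t) := by
    have : Continuous fun ε : ℝ => t + ε * c := by fun_prop
    exact (this.tendsto' 0 t (by simp)).mono_left nhdsWithin_le_nhds
  constructor
  · intro h
    obtain ⟨ε, hε, hεpos⟩ := (h.and self_mem_nhdsWithin).exists
    have : 0 < ε * c := mul_pos hεpos hc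
    exact ⟨ge_of_tendsto hlim (h.mono fun _ h => h.1), by linarith [hε.2]⟩
  · rintro ⟨h0, h1⟩
    filter_upwards [hlim.eventually_lt_const h1, self_mem_nhdsWithin] with ε hε hεpos
    exact ⟨add_nonneg h0 (mul_pos hεpos hc).le, hε.le⟩

lemma eventually_add_mul_mem_Icc_iff {c : ℝ} (hc : c ≠ 0) (t : ℝ) :
    (∀ᶠ ε in 𝓝[>] (0 : ℝ), t + ε * c ∈ Icc 0 1) ↔ t ∈ halfOpenUnit c := by
  rcases hc.lt_or_gt with hneg | hpos
  · have reflect : ∀ ε, (1 - t) + ε * -c ∈ Icc 0 1 ↔ t + ε * c ∈ Icc 0 1 := by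
      intro ε; simp only [mem_Icc]; constructor <;> intro h <;> constructor <;> linarith [h.1, h.2]
    have key := eventually_add_mul_mem_Icc_iff_of_pos (neg_pos.2 hneg) (1 - t)
    simp only [reflect] at key
    rw [key, halfOpenUnit, if_neg hneg.not_gt, mem_Ico, mem_Ioc]
    constructor <;> intro h <;> constructor <;> linarith [h.1, h.2]
  · rw [halfOpenUnit, if_pos hpos]
    exact eventually_add_mul_mem_Icc_iff_of_pos hpos t

lemma existsUnique_sub_intCast_mem_halfOpenUnit (c t : ℝ) :
    ∃! n : ℤ, t - n ∈ halfOpenUnit c := by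
  unfold halfOpenUnit
  split_ifs
  · simpa using existsUnique_sub_zsmul_mem_Ico zero_lt_one t 0
  · simpa using existsUnique_sub_zsmul_mem_Ioc zero_lt_one t 0

end HalfOpen

section LatticeCount

variable {η : Type*} [Fintype η] [DecidableEq η]

lemma Matrix.card_quotient_range_mulVecLin (A : Matrix η η ℤ) (hA : A.det ≠ 0) :
    Nat.card ((η → ℤ) ⧸ LinearMap.range A.mulVecLin) = A.det.natAbs := by
  have hinj : Injective A.mulVecLin := Matrix.mulVec_injective_of_det_ne_zero hA
  rw [← Submodule.natAbs_det_equiv _ (LinearEquiv.ofInjective _ hinj), ← LinearMap.det_toLin' A]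
  rfl

lemma Matrix.isUnit_det_map_intCast {A : Matrix η η ℤ} (hA : A.det ≠ 0) :
    IsUnit (A.map (Int.cast : ℤ → ℝ)).det := by
  rw [← Int.cast_det, isUnit_iff_ne_zero]
  exact_mod_cast hA

lemma Matrix.card_setOf_inv_mulVec_mem (A : Matrix η η ℤ) (hA : A.det ≠ 0) (I : η → Set ℝ)
    (hI : ∀ j (t : ℝ), ∃! n : ℤ, t - n ∈ I j) :
    Nat.card {z : η → ℤ | ∀ j, ((A.map (Int.cast : ℤ → ℝ))⁻¹ *ᵥ (Int.cast ∘ z)) j ∈ I j} =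
      A.det.natAbs := by
  set V := A.map (Int.cast : ℤ → ℝ)
  have hV : IsUnit V.det := Matrix.isUnit_det_map_intCast hA
  set coords : (η → ℤ) → η → ℝ := fun z => V⁻¹ *ᵥ (Int.cast ∘ z)
  have coords_add : ∀ z u, coords (z + A *ᵥ u) = coords z + Int.cast ∘ u := by
    intro z u
    have hcast : (Int.cast ∘ (z + A *ᵥ u) : η → ℝ) = Int.cast ∘ z + V *ᵥ (Int.cast ∘ u) := by
      ext i
      simpa using congrArg ((z i : ℝ) + ·) (RingHom.map_mulVec (Int.castRingHom ℝ) A u i)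
    simp only [coords, hcast, mulVec_add, mulVec_mulVec, nonsing_inv_mul _ hV, one_mulVec]
  rw [← A.card_quotient_range_mulVecLin hA]
  refine Nat.card_eq_of_bijective (fun z => Submodule.Quotient.mk z.1) ⟨?_, ?_⟩
  · rintro ⟨z, hz⟩ ⟨z', hz'⟩ h
    obtain ⟨u, hu⟩ := (Submodule.Quotient.eq _).1 h
    have hz_eq : z = z' + A *ᵥ u := by
      rw [show A *ᵥ u = z - z' from hu]; abel
    have hu0 : u = 0 := funext fun j => by
      have h1 : coords (z' + A *ᵥ u) j ∈ I j := hz_eq ▸ hz j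
      rw [coords_add] at h1
      refine (hI j (coords z' j + u j)).unique (y₁ := u j) (y₂ := 0) ?_ ?_
      · simpa using hz' j
      · simpa using h1
    simp [hz_eq, hu0]
  · intro q
    obtain ⟨z, rfl⟩ := Submodule.Quotient.mk_surjective _ q
    choose n hn _ using fun j => hI j (coords z j)
    have hcoords : coords (z - A *ᵥ n) = coords z - Int.cast ∘ n := by
      rw [eq_sub_iff_add_eq, ← coords_add, sub_add_cancel]
    refine ⟨⟨z - A *ᵥ n, fun j => ?_⟩, (Submodule.Quotient.eq _).2 ⟨-n, ?_⟩⟩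
    · change coords (z - A *ᵥ n) j ∈ I j
      simpa [hcoords] using hn j
    · simp [mulVec_neg]

end LatticeCount

section Parallelepiped

lemma mem_PPc_iff_of_range {ι η κ : Type*} [Fintype η] {v : ι → κ → ℝ} {S : Finset ι}
    {σ : η → ι} (hσ : Injective σ) (hS : range σ = S) (x : κ → ℝ) :
    x ∈ PPc v S ↔ ∃ b : η → ℝ, (∀ j, b j ∈ Icc 0 1) ∧ x = ∑ j, b j • v (σ j) := by
  classical
  have hS' : Finset.univ.image σ = S := Finset.coe_injective (by simpa using hS)
  subst hS'
  simp only [PPc, Finset.sum_image hσ.injOn, Finset.mem_image, Finset.mem_univ, true_and,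
    mem_ofPred_eq, mem_Icc]
  constructor
  · rintro ⟨a, ha, rfl⟩
    exact ⟨a ∘ σ, fun j => ha _ ⟨j, rfl⟩, rfl⟩
  · rintro ⟨b, hb, rfl⟩
    refine ⟨extend σ b 0, ?_, by simp only [hσ.extend_apply]⟩
    rintro _ ⟨j, rfl⟩
    simpa only [hσ.extend_apply] using hb j

variable {ι η : Type*} [Fintype η] {v : ι → η → ℝ} {S : Finset ι} {σ : η → ι}

lemma sum_smul_eq_mulVec_of_comp_eq_transpose {V : Matrix η η ℝ} (hv : v ∘ σ = Vᵀ)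
    (b : η → ℝ) : ∑ j, b j • v (σ j) = V *ᵥ b := by
  simp [mulVec_eq_sum, ← hv]

variable [DecidableEq η]

lemma mem_PPc_iff_inv_mulVec_mem (hσ : Injective σ) (hS : range σ = S) {V : Matrix η η ℝ}
    (hV : IsUnit V.det) (hv : v ∘ σ = Vᵀ) (x : η → ℝ) :
    x ∈ PPc v S ↔ ∀ j, (V⁻¹ *ᵥ x) j ∈ Icc 0 1 := by
  simp only [mem_PPc_iff_of_range hσ hS, sum_smul_eq_mulVec_of_comp_eq_transpose hv]
  constructor
  · rintro ⟨b, hb, rfl⟩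
    rwa [mulVec_mulVec, nonsing_inv_mul _ hV, one_mulVec]
  · intro h
    exact ⟨_, h, by rw [mulVec_mulVec, mul_nonsing_inv _ hV, one_mulVec]⟩

lemma inv_mulVec_apply_ne_zero [DecidableEq ι] (hσ : Injective σ) (hS : range σ = S)
    {V : Matrix η η ℝ} (hV : IsUnit V.det) (hv : v ∘ σ = Vᵀ) {w : η → ℝ}
    (hw : ∀ i ∈ S, w ∉ Submodule.span ℝ (v '' ↑(S.erase i))) (j : η) :
    (V⁻¹ *ᵥ w) j ≠ 0 := by
  have hmem : ∀ i, σ i ∈ S := fun i => Finset.mem_coe.1 (hS ▸ mem_range_self i)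
  intro h0
  apply hw (σ j) (hmem j)
  have hw_eq : w = ∑ i ∈ Finset.univ.erase j, (V⁻¹ *ᵥ w) i • v (σ i) := by
    rw [Finset.sum_erase _ (by rw [h0, zero_smul]), sum_smul_eq_mulVec_of_comp_eq_transpose hv,
      mulVec_mulVec, mul_nonsing_inv _ hV, one_mulVec]
  rw [hw_eq]
  refine Submodule.sum_mem _ fun i hi => Submodule.smul_mem _ _ (Submodule.subset_span ?_)
  exact ⟨σ i, Finset.mem_erase.2 ⟨hσ.ne (Finset.ne_of_mem_erase hi), hmem i⟩, rfl⟩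

end Parallelepiped

lemma card_eventually_mem_PPc {ι η : Type*} [DecidableEq ι] [Fintype η] [DecidableEq η]
    {v : ι → η → ℝ} {S : Finset ι} {σ : η → ι} (hσ : Injective σ) (hS : range σ = S)
    {A : Matrix η η ℤ} (hA : A.det ≠ 0) (hv : v ∘ σ = (A.map (Int.cast : ℤ → ℝ))ᵀ)
    {w : η → ℝ} (hw : ∀ i ∈ S, w ∉ Submodule.span ℝ (v '' ↑(S.erase i))) :
    Nat.card {z : η → ℤ | ∀ᶠ ε in 𝓝[>] (0 : ℝ), Int.cast ∘ z + ε • w ∈ PPc v S} = A.det.natAbs := by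
  have hV := Matrix.isUnit_det_map_intCast hA
  set V := A.map (Int.cast : ℤ → ℝ)
  have hset : {z : η → ℤ | ∀ᶠ ε in 𝓝[>] (0 : ℝ), Int.cast ∘ z + ε • w ∈ PPc v S} =
      {z | ∀ j, (V⁻¹ *ᵥ (Int.cast ∘ z)) j ∈ halfOpenUnit ((V⁻¹ *ᵥ w) j)} := by
    ext z
    simp only [mem_ofPred_eq, mem_PPc_iff_inv_mulVec_mem hσ hS hV hv, mulVec_add, mulVec_smul,
      Pi.add_apply, Pi.smul_apply, smul_eq_mul, eventually_all]
    exact forall_congr' fun j =>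
      eventually_add_mul_mem_Icc_iff (inv_mulVec_apply_ne_zero hσ hS hV hv hw j) _
  rw [hset]
  exact A.card_setOf_inv_mulVec_mem hA _ fun j => existsUnique_sub_intCast_mem_halfOpenUnit _

lemma wAssoc_iff {r m : ℕ} (M : Matrix (Fin r) (Fin m) ℤ) (w x : Fin r ⊕ Fin m → ℝ)
    (B : Finset (Fin r ⊕ Fin m)) :
    WAssoc M w x B ↔
      (∀ᶠ ε in 𝓝[>] (0 : ℝ), x ∘ Sum.inl + ε • (w ∘ Sum.inl) ∈ PPc (colD M) B) ∧
      (∀ᶠ ε in 𝓝[>] (0 : ℝ), x ∘ Sum.inr + ε • (w ∘ Sum.inr) ∈ PPc (colDhat M) Bᶜ) := by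
  rw [← eventually_and, (nhdsGT_basis 0).eventually_iff, WAssoc]
  simp only [mem_Ioo, and_imp]
  rfl

lemma card_setOf_wAssoc {r m : ℕ} (M : Matrix (Fin r) (Fin m) ℤ) (w : Fin r ⊕ Fin m → ℝ)
    (B : Finset (Fin r ⊕ Fin m)) :
    Nat.card {z : Fin r ⊕ Fin m → ℤ | WAssoc M w (fun j => (z j : ℝ)) B} =
      Nat.card {z : Fin r → ℤ |
        ∀ᶠ ε in 𝓝[>] (0 : ℝ), Int.cast ∘ z + ε • (w ∘ Sum.inl) ∈ PPc (colD M) B} *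
      Nat.card {z : Fin m → ℤ |
        ∀ᶠ ε in 𝓝[>] (0 : ℝ), Int.cast ∘ z + ε • (w ∘ Sum.inr) ∈ PPc (colDhat M) Bᶜ} := by
  rw [← Nat.card_prod]
  exact Nat.card_congr <| ((Equiv.sumArrowEquivProdArrow _ _ ℤ).subtypeEquiv
    fun z => wAssoc_iff M w _ B).trans Equiv.subtypeProdEquivProd

section Enumeration

variable {α β : Type*} [LinearOrder β] [DecidableEq β]

/-- `colEnum B h` is `enumVia finSumFinEquiv B h`; the general form also enumerates `Bᶜ`. -/
def enumVia (e : α ≃ β) (S : Finset α) {k : ℕ} (h : (S.image e).card = k) : Fin k → α :=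
  fun i => e.symm ((S.image e).orderIsoOfFin h i)

lemma enumVia_injective (e : α ≃ β) (S : Finset α) {k : ℕ} (h : (S.image e).card = k) :
    Injective (enumVia e S h) :=
  e.symm.injective.comp (Subtype.val_injective.comp (OrderIso.injective _))

lemma range_enumVia (e : α ≃ β) (S : Finset α) {k : ℕ} (h : (S.image e).card = k) :
    range (enumVia e S h) = S := by
  have : range (fun i => ((S.image e).orderIsoOfFin h i : β)) = S.image e := by
    simp only [Finset.coe_orderIsoOfFin_apply]
    exact Finset.range_orderEmbOfFin _ h
  rw [show enumVia e S h = e.symm ∘ fun i => ((S.image e).orderIsoOfFin h i : β) from rfl,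
    range_comp, this, Finset.coe_image, e.symm_image_image]

end Enumeration

lemma bijective_sumElim {α β γ : Type*} {σ : α → γ} {τ : β → γ} {S : Set γ}
    (hσ : Injective σ) (hτ : Injective τ) (hσS : range σ = S) (hτS : range τ = Sᶜ) :
    Bijective (Sum.elim σ τ) := by
  refine ⟨hσ.sumElim hτ fun a b h => ?_, ?_⟩
  · have ha : σ a ∈ S := hσS ▸ mem_range_self a
    have hb : τ b ∈ Sᶜ := hτS ▸ mem_range_self b
    exact hb (h ▸ ha)
  · rw [← range_eq_univ, Set.Sum.elim_range, hσS, hτS, union_compl_self]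

lemma Matrix.det_one_add_mul_transpose_ne_zero {κ ν : Type*} [Fintype κ] [DecidableEq κ]
    [Fintype ν] (N : Matrix κ ν ℤ) : (1 + N * Nᵀ).det ≠ 0 := by
  set R := N.map (Int.castRingHom ℝ)
  have hpd : (1 + R * Rᵀ).PosDef := by
    simpa using PosDef.one.add_posSemidef (posSemidef_self_mul_conjTranspose R)
  have hcast : Int.castRingHom ℝ (1 + N * Nᵀ).det = (1 + R * Rᵀ).det := by
    rw [RingHom.map_det, map_add, map_one, RingHom.mapMatrix_apply, Matrix.map_mul]
    rfl
  intro h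
  exact hpd.det_pos.ne' (by rw [← hcast, h, map_zero])

lemma Matrix.det_submatrix_inl_eq_sign_mul_det_fromRows {α β R : Type*} [Fintype α]
    [DecidableEq α] [Fintype β] [DecidableEq β] [CommRing R] (X : Matrix α (α ⊕ β) R)
    (ρ : Equiv.Perm (α ⊕ β)) :
    (X.submatrix id (ρ ∘ Sum.inl)).det =
      ρ.sign * (fromRows X ((1 : Matrix (α ⊕ β) (α ⊕ β) R).submatrix (ρ ∘ Sum.inr) id)).det := by
  rw [← det_permute']
  have : (fromRows X ((1 : Matrix (α ⊕ β) (α ⊕ β) R).submatrix (ρ ∘ Sum.inr) id)).submatrix id ρ =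
      fromBlocks (X.submatrix id (ρ ∘ Sum.inl)) (X.submatrix id (ρ ∘ Sum.inr)) 0 1 := by
    ext (i | j) (i' | j') <;> simp [Matrix.one_apply, ρ.injective.eq_iff]
  rw [this, det_fromBlocks_zero₂₁, det_one, mul_one]

section Duality

variable {r m : ℕ} (M : Matrix (Fin r) (Fin m) ℤ)

lemma Dmat_mul_Dhat_transpose : Dmat M * (Dhat M)ᵀ = 0 := by
  simp [Dmat, Dhat, transpose_fromCols, fromCols_mul_fromRows]

lemma Dmat_mul_Dmat_transpose : Dmat M * (Dmat M)ᵀ = 1 + M * Mᵀ := by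
  simp [Dmat, transpose_fromCols, fromCols_mul_fromRows]

lemma Dfull_transpose : (Dfull M)ᵀ = fromCols (Dmat M)ᵀ (Dhat M)ᵀ := by
  rw [Dfull, ← fromRows_fromCols_eq_fromBlocks, transpose_fromRows, Dmat, Dhat]

lemma det_Dfull : (Dfull M).det = (1 + M * Mᵀ).det := by
  rw [Dfull, det_fromBlocks_one₂₂, Matrix.mul_neg, sub_neg_eq_add]

lemma natAbs_det_Dhat_submatrix (ρ : Equiv.Perm (Fin r ⊕ Fin m)) :
    ((Dhat M).submatrix id (ρ ∘ Sum.inr)).det.natAbs =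
      ((Dmat M).submatrix id (ρ ∘ Sum.inl)).det.natAbs := by
  set E := (1 : Matrix (Fin r ⊕ Fin m) (Fin r ⊕ Fin m) ℤ).submatrix (ρ ∘ Sum.inr) id
  set Q := (Dhat M).submatrix id (ρ ∘ Sum.inr)
  have hEQ : E * (Dhat M)ᵀ = Qᵀ := by
    ext j b
    simp [E, Q, Matrix.mul_apply, Matrix.one_apply]
  have hprod : fromRows (Dmat M) E * (Dfull M)ᵀ =
      fromBlocks (1 + M * Mᵀ) 0 (E * (Dmat M)ᵀ) Qᵀ := by
    rw [Dfull_transpose, fromRows_mul_fromCols, Dmat_mul_Dmat_transpose,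
      Dmat_mul_Dhat_transpose, hEQ]
  have hdet : (fromRows (Dmat M) E).det * (1 + M * Mᵀ).det = (1 + M * Mᵀ).det * Q.det := by
    have := congrArg det hprod
    rwa [det_mul, det_transpose, det_Dfull, det_fromBlocks_zero₁₂, det_transpose] at this
  have hQ : (fromRows (Dmat M) E).det = Q.det :=
    mul_right_cancel₀ M.det_one_add_mul_transpose_ne_zero (hdet.trans (mul_comm _ _))
  rw [det_submatrix_inl_eq_sign_mul_det_fromRows, hQ, Int.natAbs_mul]
  simp

end Duality

/-- for a shifting vector `𝔴` and a basis `B`, exactly `m(B)²` integer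
points `z` satisfy `z + ε𝔴 ∈ P(B)` for all sufficiently small `ε > 0`. -/
theorem stmt15 {r m : ℕ} (M : Matrix (Fin r) (Fin m) ℤ)
    (w : (Fin r ⊕ Fin m) → ℝ) (hw : IsShifting M w)
    (B : Finset (Fin r ⊕ Fin m)) (hB : IsBasis M B) :
    Nat.card {z : (Fin r ⊕ Fin m) → ℤ | WAssoc M w (fun j => (z j : ℝ)) B} =
      (mult M B) ^ 2 := by
  obtain ⟨hw₁, hw₂⟩ := hw B hB
  obtain ⟨hBcard, hmult⟩ := hB
  have hcard : (B.image finSumFinEquiv).card = r := by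
    rwa [Finset.card_image_of_injective _ finSumFinEquiv.injective]
  have hcardc : (Bᶜ.image finSumFinEquiv).card = m := by
    rw [Finset.card_image_of_injective _ finSumFinEquiv.injective, Finset.card_compl, hBcard]
    simp
  set σ := enumVia finSumFinEquiv B hcard
  set τ := enumVia finSumFinEquiv Bᶜ hcardc
  have hρ : Bijective (Sum.elim σ τ) := bijective_sumElim (enumVia_injective _ _ _)
    (enumVia_injective _ _ _) (range_enumVia _ _ _) (by rw [range_enumVia, Finset.coe_compl])
  have hmB : mult M B = ((Dmat M).submatrix id σ).det.natAbs := dif_pos hcard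
  have hdual : ((Dhat M).submatrix id τ).det.natAbs = ((Dmat M).submatrix id σ).det.natAbs :=
    natAbs_det_Dhat_submatrix M (Equiv.ofBijective _ hρ)
  have hdetσ : ((Dmat M).submatrix id σ).det ≠ 0 := Int.natAbs_ne_zero.1 (hmB ▸ hmult)
  have hdetτ : ((Dhat M).submatrix id τ).det ≠ 0 := Int.natAbs_ne_zero.1 (hdual ▸ hmB ▸ hmult)
  rw [card_setOf_wAssoc,
    card_eventually_mem_PPc (enumVia_injective _ _ _) (range_enumVia _ _ _) hdetσ rfl hw₁,
    card_eventually_mem_PPc (enumVia_injective _ _ _) (range_enumVia _ _ _) hdetτ rfl hw₂,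
    hdual, ← hmB, sq]
end
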